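/- arXiv:1705.07683 — 3 statements merged into one kernel-verified Lean document; each statement's English description precedes it below -/
import Mathlib

section
/- Suppose M(t) = G M̃(t) for all t and M̃ is continuously differentiable with M̃'(t) = G̃ M̃(t) for all t, for some constant matrices G, G̃ ∈ ℝ^{n×n}. Let w be a twice continuously differentiable solution of the adjoint system with data (w_T, z_T). Then φ := w' is a solution of the adjoint system with the same memory kernel M and with data (φ_T, ẑ_T) where φ_T = −Aᵀ w_T + M̃(0)ᵀ z_T and ẑ_T = Gᵀ w_T − G̃ᵀ z_T; that is, φ'(t) = −Aᵀ φ(t) − ∫_t^T M(s−t)ᵀ φ(s) ds + M̃(T−t)ᵀ (Gᵀ w_T − G̃ᵀ z_T) for t ∈ [0,T), and φ(T) = −Aᵀ w_T + M̃(0)ᵀ z_T. -/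
/-!
Since `M̃' = G̃ M̃`, we have `M̃(u)ᵀ = M̃(0)ᵀ exp (u G̃ᵀ)`, so the memory kernel
`M(s - t)ᵀ = M̃(0)ᵀ exp (-t G̃ᵀ) exp (s G̃ᵀ) Gᵀ` separates the variables `s` and `t`. The memory
integral is then a matrix function of `t` applied to an integral with variable lower limit `t`,
which the product rule and the fundamental theorem of calculus differentiate; an integration by
parts in `s` turns the result into `-M(T - t)ᵀ w(T) + ∫_t^T M(s - t)ᵀ w'(s) ds`. Differentiating
the adjoint equation of `w` on `[0, T)` therefore gives the one for `w'`, and the terminal value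
`w'(T)` follows by continuity.
-/

open MeasureTheory Matrix Set NormedSpace

lemma hasDerivAt_matrix_iff {ι κ : Type*} [Fintype ι] [Fintype κ] {X : ℝ → Matrix ι κ ℝ}
    {X' : Matrix ι κ ℝ} {t : ℝ} :
    HasDerivAt X X' t ↔ ∀ i j, HasDerivAt (fun s => X s i j) (X' i j) t :=
  hasDerivAt_pi.trans <| forall_congr' fun _ => hasDerivAt_pi

section

variable {ι κ : Type*} [Fintype ι] [Fintype κ]

lemma HasDerivAt.matrix_mulVec {X : ℝ → Matrix κ ι ℝ} {X' : Matrix κ ι ℝ} {v : ℝ → ι → ℝ}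
    {v' : ι → ℝ} {t : ℝ} (hX : HasDerivAt X X' t) (hv : HasDerivAt v v' t) :
    HasDerivAt (fun s => X s *ᵥ v s) (X' *ᵥ v t + X t *ᵥ v') t := by
  refine hasDerivAt_pi.2 fun i => ?_
  simp only [mulVec, dotProduct, Pi.add_apply, ← Finset.sum_add_distrib]
  exact HasDerivAt.fun_sum fun k _ =>
    (hasDerivAt_matrix_iff.1 hX i k).mul (hasDerivAt_pi.1 hv k)

lemma HasDerivAt.const_mulVec (Q : Matrix κ ι ℝ) {v : ℝ → ι → ℝ} {v' : ι → ℝ} {t : ℝ}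
    (hv : HasDerivAt v v' t) : HasDerivAt (fun s => Q *ᵥ v s) (Q *ᵥ v') t :=
  Q.mulVecLin.toContinuousLinearMap.hasFDerivAt.comp_hasDerivAt t hv

lemma HasDerivAt.mulVec_const {X : ℝ → Matrix κ ι ℝ} {X' : Matrix κ ι ℝ} {t : ℝ}
    (hX : HasDerivAt X X' t) (v : ι → ℝ) : HasDerivAt (fun s => X s *ᵥ v) (X' *ᵥ v) t := by
  simpa using hX.matrix_mulVec (hasDerivAt_const t v)

lemma Matrix.mulVec_intervalIntegral (Q : Matrix κ ι ℝ) {f : ℝ → ι → ℝ} {a b : ℝ}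
    (hf : IntervalIntegrable f volume a b) :
    Q *ᵥ ∫ s in a..b, f s = ∫ s in a..b, Q *ᵥ f s :=
  ((Matrix.mulVecLin Q).toContinuousLinearMap.intervalIntegral_comp_comm hf).symm

end

section MatrixExp

-- `HasDerivAt` only sees the topology of matrices, so this choice of norm is invisible in the
-- statements below.
attribute [local instance] Matrix.linftyOpNormedRing Matrix.linftyOpNormedAlgebra

variable {ι : Type*} [Fintype ι] [DecidableEq ι]

lemma Matrix.exp_add_smul (B : Matrix ι ι ℝ) (a b : ℝ) :
    exp ((a + b) • B) = exp (a • B) * exp (b • B) := by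
  rw [add_smul, Matrix.exp_add_of_commute]
  exact ((Commute.refl B).smul_left a).smul_right b

lemma hasDerivAt_exp_neg_smul (B : Matrix ι ι ℝ) (t : ℝ) :
    HasDerivAt (fun s : ℝ => exp ((-s) • B)) (-(B * exp ((-t) • B))) t := by
  have h := (hasDerivAt_exp_smul_const' (𝕂 := ℝ) B (-t)).scomp t (hasDerivAt_neg t)
  simp only [Function.comp_def, neg_one_smul] at h
  exact h

lemma eq_mul_exp_smul_of_hasDerivAt {X : ℝ → Matrix ι ι ℝ} {B : Matrix ι ι ℝ}
    (hX : ∀ t, HasDerivAt X (X t * B) t) (u : ℝ) : X u = X 0 * exp (u • B) := by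
  have hd : ∀ t, HasDerivAt (fun s => X s * exp ((-s) • B)) 0 t := fun t => by
    have h := (hX t).fun_mul (hasDerivAt_exp_neg_smul B t)
    rwa [mul_neg, mul_assoc, add_neg_cancel] at h
  have hconst : X u * exp ((-u) • B) = X 0 := by
    simpa using is_const_of_deriv_eq_zero (fun t => (hd t).differentiableAt)
      (fun t => (hd t).deriv) u 0
  rw [← hconst, mul_assoc, ← Matrix.exp_add_smul, neg_add_cancel, zero_smul, exp_zero, mul_one]

lemma hasDerivAt_intervalIntegral_exp_kernel (P B C : Matrix ι ι ℝ) {w : ℝ → ι → ℝ}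
    (hw : Continuous w) (T t : ℝ) :
    HasDerivAt (fun t => ∫ s in t..T, (P * exp ((s - t) • B) * C) *ᵥ w s)
      (-((P * C) *ᵥ w t) - ∫ s in t..T, (P * B * exp ((s - t) • B) * C) *ᵥ w s) t := by
  set J : ℝ → ι → ℝ := fun t => ∫ s in t..T, (exp (s • B) * C) *ᵥ w s
  have hc : Continuous fun s => (exp (s • B) * C) *ᵥ w s := by fun_prop
  have hJ : HasDerivAt J (-((exp (t • B) * C) *ᵥ w t)) t :=
    intervalIntegral.integral_hasDerivAt_left (hc.intervalIntegrable t T)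
      hc.stronglyMeasurable.stronglyMeasurableAtFilter hc.continuousAt
  -- the kernel separates: `exp ((s - t) • B) = exp ((-t) • B) * exp (s • B)`
  have hsep : ∀ Q t,
      ∫ s in t..T, (Q * exp ((s - t) • B) * C) *ᵥ w s = (Q * exp ((-t) • B)) *ᵥ J t := by
    intro Q t
    rw [Matrix.mulVec_intervalIntegral _ (hc.intervalIntegrable t T)]
    refine intervalIntegral.integral_congr fun s _ => ?_
    simp only [mulVec_mulVec, sub_eq_neg_add, Matrix.exp_add_smul, mul_assoc]
  have hL : HasDerivAt (fun t => P * exp ((-t) • B)) (P * -(B * exp ((-t) • B))) t :=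
    (hasDerivAt_exp_neg_smul B t).const_mul P
  rw [funext (hsep P), hsep (P * B)]
  convert hL.matrix_mulVec hJ using 1
  have hPC : P * exp ((-t) • B) * (exp (t • B) * C) = P * C := by
    rw [mul_assoc, ← mul_assoc (exp _), ← Matrix.exp_add_smul, neg_add_cancel, zero_smul,
      exp_zero, one_mul]
  rw [mulVec_neg, mulVec_mulVec, hPC, mul_neg, neg_mulVec, mul_assoc]
  abel

lemma hasDerivAt_intervalIntegral_exp_kernel_of_hasDerivAt {K : ℝ → Matrix ι ι ℝ}
    {P B C : Matrix ι ι ℝ} (hK : ∀ u, K u = P * exp (u • B) * C) {w w' : ℝ → ι → ℝ}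
    (hw : ∀ s, HasDerivAt w (w' s) s) (hw' : Continuous w') (T t : ℝ) :
    HasDerivAt (fun t => ∫ s in t..T, K (s - t) *ᵥ w s)
      ((∫ s in t..T, K (s - t) *ᵥ w' s) - K (T - t) *ᵥ w T) t := by
  obtain rfl : K = fun u => P * exp (u • B) * C := funext hK
  have hwc : Continuous w := continuous_iff_continuousAt.2 fun s => (hw s).continuousAt
  have hKd : ∀ s, HasDerivAt (fun s => P * exp ((s - t) • B) * C)
      (P * B * exp ((s - t) • B) * C) s := fun s => by
    have h := (((hasDerivAt_exp_smul_const' (𝕂 := ℝ) B (s - t)).comp_sub_const s t).const_mul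
      P).mul_const C
    rwa [← mul_assoc] at h
  have hc₁ : Continuous fun s => (P * B * exp ((s - t) • B) * C) *ᵥ w s := by fun_prop
  have hc₂ : Continuous fun s => (P * exp ((s - t) • B) * C) *ᵥ w' s := by fun_prop
  have hibp := intervalIntegral.integral_eq_sub_of_hasDerivAt
    (fun s _ => (hKd s).matrix_mulVec (hw s)) ((hc₁.add hc₂).intervalIntegrable t T)
  rw [intervalIntegral.integral_add (hc₁.intervalIntegrable t T) (hc₂.intervalIntegrable t T)]
    at hibp
  simp only [sub_self, zero_smul, exp_zero, mul_one] at hibp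
  convert hasDerivAt_intervalIntegral_exp_kernel P B C hwc T t using 1
  rw [eq_sub_iff_add_eq] at hibp
  beta_reduce
  rw [← hibp]
  abel

end MatrixExp

lemma deriv_eq_of_eqOn_of_hasDerivAt {E : Type*} [NormedAddCommGroup E] [NormedSpace ℝ E]
    {f g : ℝ → E} {g' : E} {s : Set ℝ} {t : ℝ} (hs : UniqueDiffWithinAt ℝ s t) (ht : t ∈ s)
    (hfg : EqOn f g s) (hf : DifferentiableAt ℝ f t) (hg : HasDerivAt g g' t) : deriv f t = g' :=
  hs.eq_deriv s hf.hasDerivAt.hasDerivWithinAt (hg.hasDerivWithinAt.congr hfg (hfg ht))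

theorem deriv_of_adjoint_solution_solves_adjoint_general
    (T : ℝ) (hT : 0 < T) (n : ℕ)
    (A G Gt : Matrix (Fin n) (Fin n) ℝ)
    (M Mt : ℝ → Matrix (Fin n) (Fin n) ℝ)
    (hMG : ∀ t, M t = G * Mt t)
    (hMt' : ∀ t, ∀ i j, HasDerivAt (fun s => Mt s i j) ((Gt * Mt t) i j) t)
    (wT zT : Fin n → ℝ) (w : ℝ → Fin n → ℝ)
    (hw : ContDiff ℝ 2 w)
    -- `w` solves the differential adjoint system with data `(wT, zT)`
    (heq : ∀ t ∈ Set.Ico 0 T,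
      deriv w t = -(Aᵀ *ᵥ w t) - (∫ s in Set.Ioc t T, (M (s - t))ᵀ *ᵥ w s)
        + (Mt (T - t))ᵀ *ᵥ zT)
    (hterm : w T = wT) :
    (∀ t ∈ Set.Ico 0 T,
      deriv (deriv w) t =
        -(Aᵀ *ᵥ deriv w t) - (∫ s in Set.Ioc t T, (M (s - t))ᵀ *ᵥ deriv w s)
          + (Mt (T - t))ᵀ *ᵥ (Gᵀ *ᵥ wT - Gtᵀ *ᵥ zT)) ∧
    deriv w T = -(Aᵀ *ᵥ wT) + (Mt 0)ᵀ *ᵥ zT := by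
  have hwd : Differentiable ℝ w := hw.differentiable two_ne_zero
  have hw'd : Differentiable ℝ (deriv w) := hw.differentiable_deriv_two
  have hMtT : ∀ t, HasDerivAt (fun s => (Mt s)ᵀ) ((Mt t)ᵀ * Gtᵀ) t := fun t =>
    hasDerivAt_matrix_iff.2 fun i j => by simpa [← transpose_mul] using hMt' t j i
  have hMexp : ∀ u, (M u)ᵀ = (Mt 0)ᵀ * exp (u • Gtᵀ) * Gᵀ := fun u => by
    rw [hMG, transpose_mul, ← eq_mul_exp_smul_of_hasDerivAt hMtT]
  set f : ℝ → Fin n → ℝ := fun t =>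
    -(Aᵀ *ᵥ w t) - (∫ s in t..T, (M (s - t))ᵀ *ᵥ w s) + (Mt (T - t))ᵀ *ᵥ zT with hf_def
  have hf : ∀ t, HasDerivAt f (-(Aᵀ *ᵥ deriv w t)
      - ((∫ s in t..T, (M (s - t))ᵀ *ᵥ deriv w s) - (M (T - t))ᵀ *ᵥ w T)
      - ((Mt (T - t))ᵀ * Gtᵀ) *ᵥ zT) t := fun t => by
    have h2 := hasDerivAt_intervalIntegral_exp_kernel_of_hasDerivAt hMexp
      (fun s => (hwd s).hasDerivAt) hw'd.continuous T t
    have h3 := ((hMtT (T - t)).mulVec_const zT).comp_const_sub T t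
    exact ((((hwd t).hasDerivAt.const_mulVec Aᵀ).neg).sub h2).add h3
  have hwf : EqOn (deriv w) f (Ico 0 T) := fun t ht => by
    simp only [hf_def, heq t ht, intervalIntegral.integral_of_le ht.2.le]
  refine ⟨fun t ht => ?_, ?_⟩
  · rw [deriv_eq_of_eqOn_of_hasDerivAt (uniqueDiffOn_Ico 0 T t ht) ht hwf (hw'd t) (hf t),
      intervalIntegral.integral_of_le ht.2.le, hterm, hMG, transpose_mul]
    simp only [mulVec_sub, mulVec_mulVec]
    abel
  · have hfc : Continuous f := continuous_iff_continuousAt.2 fun t => (hf t).continuousAt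
    have hT_mem : T ∈ closure (Ico 0 T) := by
      rw [closure_Ico hT.ne]; exact ⟨hT.le, le_rfl⟩
    rw [hwf.closure hw'd.continuous hfc hT_mem, hf_def]
    simp [hterm]

/-- if `M = G M̃` and `M̃' = G̃ M̃`, and `w` is a twice continuously
differentiable solution of the (differential) adjoint system with data `(w_T, z_T)`,
then `φ := w'` solves the adjoint system with the same kernel `M` and with data
`φ_T = -Aᵀ w_T + M̃(0)ᵀ z_T`, `ẑ_T = Gᵀ w_T - G̃ᵀ z_T`. -/
theorem deriv_of_adjoint_solution_solves_adjoint
    (T : ℝ) (hT : 0 < T) (n : ℕ)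
    (A G Gt : Matrix (Fin n) (Fin n) ℝ)
    (M Mt : ℝ → Matrix (Fin n) (Fin n) ℝ)
    (hMcont : ∀ i j, Continuous (fun t => M t i j))
    (hMtcont : ∀ i j, Continuous (fun t => Mt t i j))
    (hMG : ∀ t, M t = G * Mt t)
    (hMt' : ∀ t, ∀ i j, HasDerivAt (fun s => Mt s i j) ((Gt * Mt t) i j) t)
    (wT zT : Fin n → ℝ) (w : ℝ → Fin n → ℝ)
    (hw : ContDiff ℝ 2 w)
    -- `w` solves the differential adjoint system with data `(wT, zT)`
    (heq : ∀ t ∈ Set.Ico 0 T,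
      deriv w t = -(Aᵀ *ᵥ w t) - (∫ s in Set.Ioc t T, (M (s - t))ᵀ *ᵥ w s)
        + (Mt (T - t))ᵀ *ᵥ zT)
    (hterm : w T = wT) :
    (∀ t ∈ Set.Ico 0 T,
      deriv (deriv w) t =
        -(Aᵀ *ᵥ deriv w t) - (∫ s in Set.Ioc t T, (M (s - t))ᵀ *ᵥ deriv w s)
          + (Mt (T - t))ᵀ *ᵥ (Gᵀ *ᵥ wT - Gtᵀ *ᵥ zT)) ∧
    deriv w T = -(Aᵀ *ᵥ wT) + (Mt 0)ᵀ *ᵥ zT :=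
  deriv_of_adjoint_solution_solves_adjoint_general T hT n A G Gt M Mt hMG hMt' wT zT w hw heq hterm
end

section
/- Assume M, M̃ : [0,T] → ℝ^{n×n} are C^∞, and define inductively A_1 = A, M_1 = M, M̃_1 = M̃ and A_{i+1} = A A_i + M_i(0), M_{i+1}(t) = M(t) A_i + M_i'(t), M̃_{i+1}(t) = M̃(t) A_i + M̃_i'(t) for i ≥ 1. Let w be a C^∞ solution on [0,T] of the adjoint system with data (w_T, z_T). Then for every i ≥ 0 and every t ∈ [0,T], the (i+1)-st derivative of w satisfies w^{(i+1)}(t) = (−1)^{i+1} A_{i+1}ᵀ w(t) + (−1)^{i+1} ∫_t^T M_{i+1}(s−t)ᵀ w(s) ds + (−1)^i M̃_{i+1}(T−t)ᵀ z_T. -/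
open MeasureTheory Matrix Set intervalIntegral

/-- Componentwise derivative of a matrix-valued function. -/
noncomputable def matDeriv {n : ℕ} (N : ℝ → Matrix (Fin n) (Fin n) ℝ) (t : ℝ) :
    Matrix (Fin n) (Fin n) ℝ :=
  Matrix.of fun i j => deriv (fun s => N s i j) t

/-- The sequences `A_{i+1}`, `M_{i+1}`, `M̃_{i+1}` of the paper: the value at index
`i : ℕ` corresponds to the subscript `i + 1`, so `adjSeq A M Mt 0 = (A₁, M₁, M̃₁)
= (A, M, M̃)` and
`adjSeq A M Mt (i+1) = (A A_{i+1} + M_{i+1}(0), M(·) A_{i+1} + M_{i+1}'(·),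
M̃(·) A_{i+1} + M̃_{i+1}'(·))`. -/
noncomputable def adjSeq {n : ℕ} (A : Matrix (Fin n) (Fin n) ℝ)
    (M Mt : ℝ → Matrix (Fin n) (Fin n) ℝ) :
    ℕ → Matrix (Fin n) (Fin n) ℝ × (ℝ → Matrix (Fin n) (Fin n) ℝ) ×
      (ℝ → Matrix (Fin n) (Fin n) ℝ)
  | 0 => (A, M, Mt)
  | i + 1 =>
    let p := adjSeq A M Mt i
    (A * p.1 + p.2.1 0,
     fun t => M t * p.1 + matDeriv p.2.1 t,
     fun t => Mt t * p.1 + matDeriv p.2.2 t)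



lemma aux_endpoint (k : ℝ → ℝ → ℝ) (hk : Continuous fun p : ℝ × ℝ => k p.1 p.2)
    (t : ℝ) : HasDerivAt (fun τ => ∫ s in t..τ, k s τ) (k t t) t := by
  have hks : ∀ τ, Continuous fun s => k s τ := fun τ =>
    hk.comp (continuous_id.prodMk continuous_const)
  rw [hasDerivAt_iff_isLittleO, Asymptotics.isLittleO_iff]
  intro c hc
  have hcont : ContinuousAt (fun p : ℝ × ℝ => k p.1 p.2) (t, t) := hk.continuousAt
  rw [Metric.continuousAt_iff] at hcont
  obtain ⟨δ, hδ, hball⟩ := hcont c hc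
  filter_upwards [Metric.ball_mem_nhds t hδ] with τ hτ
  rw [Metric.mem_ball, Real.dist_eq] at hτ
  have h0 : (∫ s in t..t, k s t) = 0 := integral_same
  have hconst : (τ - t) • k t t = ∫ s in t..τ, k t t := (intervalIntegral.integral_const _).symm
  rw [h0, sub_zero, hconst, ← integral_sub ((hks τ).intervalIntegrable _ _)
    (continuous_const.intervalIntegrable _ _)]
  have hb : ∀ s ∈ Set.uIoc t τ, ‖k s τ - k t t‖ ≤ c := by
    intro s hs
    have hst : |s - t| ≤ |τ - t| := by
      rcases le_total t τ with h | h
      · rw [uIoc_of_le h] at hs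
        rw [abs_of_nonneg (by linarith [hs.1]), abs_of_nonneg (by linarith)]
        linarith [hs.2]
      · rw [uIoc_of_ge h] at hs
        rw [abs_of_nonpos (by linarith [hs.2]), abs_of_nonpos (by linarith)]
        linarith [hs.1]
    have hdist : dist ((s, τ) : ℝ × ℝ) (t, t) < δ := by
      rw [Prod.dist_eq]
      exact max_lt (by rw [Real.dist_eq]; exact lt_of_le_of_lt hst hτ)
        (by rw [Real.dist_eq]; exact hτ)
    have := hball hdist
    rw [Real.dist_eq] at this
    exact le_of_lt this
  calc ‖∫ s in t..τ, (k s τ - k t t)‖ ≤ c * |τ - t| :=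
        intervalIntegral.norm_integral_le_of_norm_le_const hb
    _ = c * ‖τ - t‖ := by rw [Real.norm_eq_abs]

lemma aux_param (a b : ℝ) (g h : ℝ → ℝ) (hg : ContDiff ℝ (⊤:ℕ∞) g) (hh : Continuous h)
    (t : ℝ) :
    HasDerivAt (fun τ => ∫ s in a..b, g (s - τ) * h s)
      (∫ s in a..b, -(deriv g (s - t) * h s)) t := by
  have hgc : Continuous g := hg.continuous
  have hgd : Continuous (deriv g) := hg.continuous_deriv (by exact_mod_cast le_top)
  set F : ℝ → ℝ → ℝ := fun τ s => g (s - τ) * h s with hF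
  set F' : ℝ → ℝ → ℝ := fun τ s => -(deriv g (s - τ) * h s) with hF'
  -- bound on compact set
  have hq : Continuous fun p : ℝ × ℝ => deriv g (p.2 - p.1) * h p.2 :=
    (hgd.comp (continuous_snd.sub continuous_fst)).mul (hh.comp continuous_snd)
  obtain ⟨C, hC⟩ := (((isCompact_Icc (a := t - 1) (b := t + 1)).prod
    (isCompact_uIcc (a := a) (b := b)))).exists_bound_of_continuousOn hq.continuousOn
  have key := intervalIntegral.hasDerivAt_integral_of_dominated_loc_of_deriv_le
    (F := F) (F' := F') (x₀ := t) (a := a) (b := b) (bound := fun _ => C)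
    (μ := volume) (s := Metric.ball t 1) (Metric.ball_mem_nhds t one_pos)
    (Filter.Eventually.of_forall fun τ =>
      ((hgc.comp (continuous_id.sub continuous_const)).mul hh).aestronglyMeasurable.restrict)
    (((hgc.comp (continuous_id.sub continuous_const)).mul hh).intervalIntegrable a b)
    (((hgd.comp (continuous_id.sub continuous_const)).mul hh).neg.aestronglyMeasurable.restrict)
    (Filter.Eventually.of_forall fun s hs τ hτ => by
      have h1 : (τ, s) ∈ Icc (t - 1) (t + 1) ×ˢ uIcc a b := by
        constructor
        · rw [Metric.mem_ball, Real.dist_eq] at hτ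
          constructor <;> [linarith [abs_le.mp (le_of_lt hτ) |>.1];
            linarith [abs_le.mp (le_of_lt hτ) |>.2]]
        · exact uIoc_subset_uIcc hs
      have := hC _ h1
      simpa [F'] using this)
    (continuous_const.intervalIntegrable a b)
    (Filter.Eventually.of_forall fun s hs τ hτ => by
      have hinner : HasDerivAt (fun x : ℝ => s - x) (-1) τ := by
        simpa using (hasDerivAt_id τ).const_sub s
      have houter : HasDerivAt g (deriv g (s - τ)) (s - τ) :=
        ((hg.differentiable (by simp)) (s - τ)).hasDerivAt
      have := (houter.comp τ hinner).mul_const (h s)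
      simpa [F, F', mul_comm] using this)
  exact key.2

lemma aux_key_scalar (T : ℝ) (g h : ℝ → ℝ) (hg : ContDiff ℝ (⊤:ℕ∞) g) (hh : Continuous h)
    (t : ℝ) :
    HasDerivAt (fun τ => ∫ s in τ..T, g (s - τ) * h s)
      ((∫ s in t..T, -(deriv g (s - t) * h s)) - g 0 * h t) t := by
  have hgc : Continuous g := hg.continuous
  have hcont : ∀ τ, Continuous fun s => g (s - τ) * h s := fun τ =>
    (hgc.comp (continuous_id.sub continuous_const)).mul hh
  have hsplit : ∀ τ, (∫ s in τ..T, g (s - τ) * h s)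
      = (∫ s in t..T, g (s - τ) * h s) - ∫ s in t..τ, g (s - τ) * h s := by
    intro τ
    rw [eq_sub_iff_add_eq, add_comm]
    exact intervalIntegral.integral_add_adjacent_intervals
      ((hcont τ).intervalIntegrable _ _) ((hcont τ).intervalIntegrable _ _)
  have h1 := aux_param t T g h hg hh t
  have h2 : HasDerivAt (fun τ => ∫ s in t..τ, g (s - τ) * h s) (g 0 * h t) t := by
    have hk : Continuous fun p : ℝ × ℝ => g (p.1 - p.2) * h p.1 :=
      (hgc.comp (continuous_fst.sub continuous_snd)).mul (hh.comp continuous_fst)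
    have := aux_endpoint (fun s τ => g (s - τ) * h s) hk t
    simpa using this
  simp only [hsplit]
  exact h1.sub h2

lemma transpose_mulVec_apply {n : ℕ} (N : Matrix (Fin n) (Fin n) ℝ) (v : Fin n → ℝ)
    (a : Fin n) : (Nᵀ *ᵥ v) a = ∑ j, N j a * v j := by
  simp [Matrix.mulVec, dotProduct]

lemma cont_shift_mulVec {n : ℕ} (N : ℝ → Matrix (Fin n) (Fin n) ℝ)
    (hN : ∀ a b, Continuous fun u => N u a b) (v : ℝ → Fin n → ℝ) (hv : Continuous v)
    (c : ℝ) : Continuous fun s => (N (s - c))ᵀ *ᵥ v s := by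
  refine continuous_pi fun a => ?_
  simp only [transpose_mulVec_apply]
  exact continuous_finset_sum _ fun j _ =>
    ((hN j a).comp (continuous_id.sub continuous_const)).mul ((continuous_apply j).comp hv)

lemma integral_Ioc_apply {n : ℕ} {f : ℝ → Fin n → ℝ} {a b : ℝ}
    (hf : IntegrableOn f (Ioc a b)) (i : Fin n) :
    (∫ s in Ioc a b, f s) i = ∫ s in Ioc a b, f s i :=
  ((ContinuousLinearMap.proj (R := ℝ) (φ := fun _ : Fin n => ℝ) i).integral_comp_comm hf).symm

lemma intervalIntegral_apply {n : ℕ} {f : ℝ → Fin n → ℝ} {a b : ℝ} (hf : Continuous f)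
    (i : Fin n) : (∫ s in a..b, f s) i = ∫ s in a..b, f s i := by
  rcases le_total a b with hab | hab
  · rw [intervalIntegral.integral_of_le hab, intervalIntegral.integral_of_le hab,
      integral_Ioc_apply hf.integrableOn_Ioc]
  · rw [intervalIntegral.integral_of_ge hab, intervalIntegral.integral_of_ge hab,
      Pi.neg_apply, integral_Ioc_apply hf.integrableOn_Ioc]

lemma aux_key (T : ℝ) {n : ℕ} (N : ℝ → Matrix (Fin n) (Fin n) ℝ)
    (hN : ∀ a b, ContDiff ℝ (⊤:ℕ∞) fun u => N u a b) (h : ℝ → Fin n → ℝ)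
    (hh : Continuous h) {t : ℝ} (ht : t < T) :
    HasDerivAt (fun τ => ∫ s in Ioc τ T, (N (s - τ))ᵀ *ᵥ h s)
      (-((N 0)ᵀ *ᵥ h t) - ∫ s in Ioc t T, (matDeriv N (s - t))ᵀ *ᵥ h s) t := by
  have hNc : ∀ a b, Continuous fun u => N u a b := fun a b => (hN a b).continuous
  have hNd : ∀ a b, Continuous fun u => matDeriv N u a b := fun a b =>
    (hN a b).continuous_deriv (by exact_mod_cast le_top)
  have hDc : ∀ a b, Continuous fun u => matDeriv N u a b := hNd
  have hcont : ∀ τ, Continuous fun s => (N (s - τ))ᵀ *ᵥ h s := fun τ =>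
    cont_shift_mulVec N hNc h hh τ
  have hcontD : Continuous fun s => (matDeriv N (s - t))ᵀ *ᵥ h s :=
    cont_shift_mulVec (matDeriv N) hDc h hh t
  -- interval-integral version
  have main : HasDerivAt (fun τ => ∫ s in τ..T, (N (s - τ))ᵀ *ᵥ h s)
      (-((N 0)ᵀ *ᵥ h t) - ∫ s in Ioc t T, (matDeriv N (s - t))ᵀ *ᵥ h s) t := by
    rw [hasDerivAt_pi]
    intro a
    have hcomp : ∀ τ, (∫ s in τ..T, (N (s - τ))ᵀ *ᵥ h s) a
        = ∑ j, ∫ s in τ..T, N (s - τ) j a * h s j := by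
      intro τ
      rw [intervalIntegral_apply (hcont τ)]
      rw [show (fun s => ((N (s - τ))ᵀ *ᵥ h s) a) = fun s => ∑ j, N (s - τ) j a * h s j from
        funext fun s => transpose_mulVec_apply _ _ _]
      exact intervalIntegral.integral_finset_sum fun j _ =>
        (((hNc j a).comp (continuous_id.sub continuous_const)).mul
          ((continuous_apply j).comp hh)).intervalIntegrable _ _
    simp only [hcomp]
    have hsum : HasDerivAt (fun τ => ∑ j, ∫ s in τ..T, N (s - τ) j a * h s j)
        (∑ j, ((∫ s in t..T, -(deriv (fun u => N u j a) (s - t) * h s j))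
          - N 0 j a * h t j)) t :=
      HasDerivAt.fun_sum fun j _ => aux_key_scalar T (fun u => N u j a) (fun s => h s j)
        (hN j a) ((continuous_apply j).comp hh) t
    refine hsum.congr_deriv ?_
    rw [Finset.sum_sub_distrib]
    have e1 : (-((N 0)ᵀ *ᵥ h t)) a = -∑ j, N 0 j a * h t j := by
      rw [Pi.neg_apply, transpose_mulVec_apply]
    have e2 : (∫ s in Ioc t T, (matDeriv N (s - t))ᵀ *ᵥ h s) a
        = ∑ j, ∫ s in t..T, deriv (fun u => N u j a) (s - t) * h s j := by
      rw [← intervalIntegral.integral_of_le ht.le, intervalIntegral_apply hcontD,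
        show (fun s => ((matDeriv N (s - t))ᵀ *ᵥ h s) a)
          = fun s => ∑ j, deriv (fun u => N u j a) (s - t) * h s j from
          funext fun s => transpose_mulVec_apply _ _ _]
      exact intervalIntegral.integral_finset_sum fun j _ =>
        (((hNd j a).comp (continuous_id.sub continuous_const)).mul
          ((continuous_apply j).comp hh)).intervalIntegrable _ _
    rw [Pi.sub_apply, e1, e2]
    simp only [intervalIntegral.integral_neg]
    simp only [Finset.sum_neg_distrib]
    abel
  refine main.congr_of_eventuallyEq ?_
  filter_upwards [Iio_mem_nhds ht] with τ hτ
  rw [intervalIntegral.integral_of_le (le_of_lt hτ)]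

lemma cont_mulVec_entries {n : ℕ} (G : ℝ → Matrix (Fin n) (Fin n) ℝ)
    (hG : ∀ a b, Continuous fun u => G u a b) (z : Fin n → ℝ) (φ : ℝ → ℝ)
    (hφ : Continuous φ) : Continuous fun τ => (G (φ τ))ᵀ *ᵥ z := by
  refine continuous_pi fun a => ?_
  simp only [transpose_mulVec_apply]
  exact continuous_finset_sum _ fun j _ => (((hG j a).comp hφ)).mul continuous_const

lemma cont_mulVec_comp {n : ℕ} (B : Matrix (Fin n) (Fin n) ℝ) {v : ℝ → Fin n → ℝ}
    (hv : Continuous v) : Continuous fun τ => B *ᵥ v τ := by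
  refine continuous_pi fun a => ?_
  simp only [Matrix.mulVec, dotProduct]
  exact continuous_finset_sum _ fun j _ =>
    continuous_const.mul ((continuous_apply j).comp hv)

lemma hasDerivAt_mulVec {n : ℕ} (B : Matrix (Fin n) (Fin n) ℝ) {v : ℝ → Fin n → ℝ}
    {v' : Fin n → ℝ} {t : ℝ} (hv : HasDerivAt v v' t) :
    HasDerivAt (fun τ => B *ᵥ v τ) (B *ᵥ v') t := by
  rw [hasDerivAt_pi] at hv ⊢
  intro a
  have : HasDerivAt (fun τ => ∑ j, B a j * v τ j) (∑ j, B a j * v' j) t :=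
    HasDerivAt.fun_sum fun j _ => (hv j).const_mul (B a j)
  simpa [Matrix.mulVec, dotProduct] using this

lemma hasDerivAt_shiftT {n : ℕ} (G : ℝ → Matrix (Fin n) (Fin n) ℝ)
    (hG : ∀ a b, ContDiff ℝ (⊤:ℕ∞) fun u => G u a b) (T : ℝ) (z : Fin n → ℝ) (t : ℝ) :
    HasDerivAt (fun τ => (G (T - τ))ᵀ *ᵥ z) (-((matDeriv G (T - t))ᵀ *ᵥ z)) t := by
  rw [hasDerivAt_pi]
  intro a
  have he : ∀ j : Fin n, HasDerivAt (fun τ => G (T - τ) j a)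
      (-(deriv (fun u => G u j a) (T - t))) t := by
    intro j
    have hinner : HasDerivAt (fun τ : ℝ => T - τ) (-1) t := by
      simpa using (hasDerivAt_id t).const_sub T
    have houter : HasDerivAt (fun u => G u j a) (deriv (fun u => G u j a) (T - t)) (T - t) :=
      (((hG j a).differentiable (by simp)) (T - t)).hasDerivAt
    have := houter.comp t hinner
    simpa [mul_comm, Function.comp_def] using this
  have : HasDerivAt (fun τ => ∑ j, G (T - τ) j a * z j)
      (∑ j, -(deriv (fun u => G u j a) (T - t)) * z j) t :=
    HasDerivAt.fun_sum fun j _ => (he j).mul_const (z j)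
  simp only [transpose_mulVec_apply, Pi.neg_apply]
  refine this.congr_deriv ?_
  rw [← Finset.sum_neg_distrib]
  congr 1
  funext j
  simp [matDeriv]

lemma mulVec_integral {n : ℕ} (B : Matrix (Fin n) (Fin n) ℝ) {f : ℝ → Fin n → ℝ}
    {a b : ℝ} (hf : IntegrableOn f (Ioc a b)) :
    B *ᵥ (∫ s in Ioc a b, f s) = ∫ s in Ioc a b, B *ᵥ f s := by
  have := ((Matrix.mulVecLin B).toContinuousLinearMap).integral_comp_comm hf
  simp only [LinearMap.coe_toContinuousLinearMap', Matrix.mulVecLin_apply] at this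
  exact this.symm

lemma aux_tendsto (T : ℝ) {n : ℕ} (N : ℝ → Matrix (Fin n) (Fin n) ℝ)
    (hN : ∀ a b, Continuous fun u => N u a b) (h : ℝ → Fin n → ℝ) (hh : Continuous h) :
    Filter.Tendsto (fun τ => ∫ s in Ioc τ T, (N (s - τ))ᵀ *ᵥ h s)
      (nhdsWithin T (Iio T)) (nhds 0) := by
  have hq : Continuous fun p : ℝ × ℝ => (N (p.2 - p.1))ᵀ *ᵥ h p.2 := by
    refine continuous_pi fun a => ?_
    simp only [transpose_mulVec_apply]
    exact continuous_finset_sum _ fun j _ =>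
      ((hN j a).comp (continuous_snd.sub continuous_fst)).mul
        ((continuous_apply j).comp (hh.comp continuous_snd))
  obtain ⟨C, hC⟩ := ((isCompact_Icc (a := T - 1) (b := T)).prod
    (isCompact_Icc (a := T - 1) (b := T))).exists_bound_of_continuousOn hq.continuousOn
  have hbound : ∀ᶠ τ in nhdsWithin T (Iio T),
      ‖∫ s in Ioc τ T, (N (s - τ))ᵀ *ᵥ h s‖ ≤ C * (T - τ) := by
    filter_upwards [Ioo_mem_nhdsLT (by linarith : T - 1 < T)]
      with τ hτ
    have hm : volume (Ioc τ T) < ⊤ := by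
      rw [Real.volume_Ioc]; exact ENNReal.ofReal_lt_top
    have hb : ∀ s ∈ Ioc τ T, ‖(N (s - τ))ᵀ *ᵥ h s‖ ≤ C := by
      intro s hs
      exact hC (τ, s) ⟨⟨hτ.1.le, hτ.2.le⟩, ⟨by cases hs; linarith [hτ.1], hs.2⟩⟩
    have := norm_setIntegral_le_of_norm_le_const hm hb
    rwa [measureReal_def, Real.volume_Ioc, ENNReal.toReal_ofReal (by cases hτ; linarith)] at this
  have hlim : Filter.Tendsto (fun τ => C * (T - τ)) (nhdsWithin T (Iio T)) (nhds 0) := by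
    have : Filter.Tendsto (fun τ => C * (T - τ)) (nhds T) (nhds (C * (T - T))) :=
      (continuous_const.mul (continuous_const.sub continuous_id)).tendsto T
    simpa using this.mono_left nhdsWithin_le_nhds
  exact squeeze_zero_norm' hbound hlim


lemma adjSeq_smooth {n : ℕ} (A : Matrix (Fin n) (Fin n) ℝ)
    (M Mt : ℝ → Matrix (Fin n) (Fin n) ℝ)
    (hM : ∀ a b, ContDiff ℝ (⊤:ℕ∞) fun t => M t a b)
    (hMt : ∀ a b, ContDiff ℝ (⊤:ℕ∞) fun t => Mt t a b) :
    ∀ i, (∀ a b, ContDiff ℝ (⊤:ℕ∞) fun t => (adjSeq A M Mt i).2.1 t a b) ∧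
      (∀ a b, ContDiff ℝ (⊤:ℕ∞) fun t => (adjSeq A M Mt i).2.2 t a b) := by
  intro i
  induction i with
  | zero => exact ⟨hM, hMt⟩
  | succ i ih =>
    have hd1 : ∀ a b, ContDiff ℝ (⊤:ℕ∞) fun t => deriv (fun s => (adjSeq A M Mt i).2.1 s a b) t := by
      intro a b
      have := (ih.1 a b).iterate_deriv 1
      simpa using this
    have hd2 : ∀ a b, ContDiff ℝ (⊤:ℕ∞) fun t => deriv (fun s => (adjSeq A M Mt i).2.2 s a b) t := by
      intro a b
      have := (ih.2 a b).iterate_deriv 1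
      simpa using this
    constructor
    · intro a b
      have he : (fun t => (adjSeq A M Mt (i+1)).2.1 t a b)
          = fun t => (∑ j, M t a j * (adjSeq A M Mt i).1 j b)
            + deriv (fun s => (adjSeq A M Mt i).2.1 s a b) t := by
        funext t
        simp [adjSeq, Matrix.add_apply, Matrix.mul_apply, matDeriv]
      rw [he]
      exact (ContDiff.sum fun j _ => (hM a j).mul contDiff_const).add (hd1 a b)
    · intro a b
      have he : (fun t => (adjSeq A M Mt (i+1)).2.2 t a b)
          = fun t => (∑ j, Mt t a j * (adjSeq A M Mt i).1 j b)
            + deriv (fun s => (adjSeq A M Mt i).2.2 s a b) t := by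
        funext t
        simp [adjSeq, Matrix.add_apply, Matrix.mul_apply, matDeriv]
      rw [he]
      exact (ContDiff.sum fun j _ => (hMt a j).mul contDiff_const).add (hd2 a b)


/-- iterated time derivatives of a smooth solution of the adjoint system
satisfy
`w^{(i+1)}(t) = (-1)^{i+1} A_{i+1}ᵀ w(t) + (-1)^{i+1} ∫_t^T M_{i+1}(s-t)ᵀ w(s) ds
  + (-1)^i M̃_{i+1}(T-t)ᵀ z_T`. -/
theorem iterated_deriv_of_adjoint_solution
    (T : ℝ) (hT : 0 < T) (n : ℕ)
    (A : Matrix (Fin n) (Fin n) ℝ)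
    (M Mt : ℝ → Matrix (Fin n) (Fin n) ℝ)
    (hMsm : ∀ i j, ContDiff ℝ (⊤ : ℕ∞) (fun t => M t i j))
    (hMtsm : ∀ i j, ContDiff ℝ (⊤ : ℕ∞) (fun t => Mt t i j))
    (wT zT : Fin n → ℝ) (w : ℝ → Fin n → ℝ)
    (hw : ContDiff ℝ (⊤ : ℕ∞) w)
    -- `w` solves the differential adjoint system with data `(wT, zT)` on `[0,T)`
    (heq : ∀ t ∈ Set.Ico 0 T,
      deriv w t = -(Aᵀ *ᵥ w t) - (∫ s in Set.Ioc t T, (M (s - t))ᵀ *ᵥ w s)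
        + (Mt (T - t))ᵀ *ᵥ zT)
    (hterm : w T = wT) :
    ∀ i : ℕ, ∀ t ∈ Set.Icc 0 T,
      iteratedDeriv (i + 1) w t =
        ((-1 : ℝ) ^ (i + 1)) • ((adjSeq A M Mt i).1ᵀ *ᵥ w t) +
        ((-1 : ℝ) ^ (i + 1)) •
          (∫ s in Set.Ioc t T, ((adjSeq A M Mt i).2.1 (s - t))ᵀ *ᵥ w s) +
        ((-1 : ℝ) ^ i) • (((adjSeq A M Mt i).2.2 (T - t))ᵀ *ᵥ zT) := by
  have hM' : ∀ a b, ContDiff ℝ (⊤:ℕ∞) fun t => M t a b := fun a b => (hMsm a b).of_le (by simp)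
  have hMt' : ∀ a b, ContDiff ℝ (⊤:ℕ∞) fun t => Mt t a b := fun a b => (hMtsm a b).of_le (by simp)
  have hw' : ContDiff ℝ (⊤:ℕ∞) w := hw.of_le (by simp)
  have hwc : Continuous w := hw'.continuous
  have hsm := adjSeq_smooth A M Mt hM' hMt'
  set P : ℕ → _ := adjSeq A M Mt with hP
  set R : ℕ → ℝ → (Fin n → ℝ) := fun i τ =>
    ((-1:ℝ)^(i+1)) • ((P i).1ᵀ *ᵥ w τ) +
    ((-1:ℝ)^(i+1)) • (∫ s in Set.Ioc τ T, ((P i).2.1 (s - τ))ᵀ *ᵥ w s) +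
    ((-1:ℝ)^i) • (((P i).2.2 (T - τ))ᵀ *ᵥ zT) with hR
  have hiter : ∀ m : ℕ, ContDiff ℝ (⊤:ℕ∞) (iteratedDeriv m w) := fun m => by
    rw [iteratedDeriv_eq_iterate]; exact hw'.iterate_deriv m
  -- Phase 1 : the identity on [0, T)
  have key : ∀ i, ∀ t ∈ Set.Ico 0 T, iteratedDeriv (i + 1) w t = R i t := by
    intro i
    induction i with
    | zero =>
      intro t ht
      rw [iteratedDeriv_one, heq t ht]
      simp only [hR, hP]
      simp [adjSeq, sub_eq_add_neg]
    | succ i ih =>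
      intro t ht
      have htT : t < T := ht.2
      have hNm := (hsm i).1
      have hG := (hsm i).2
      have hNmc : ∀ a b, Continuous fun u => (P i).2.1 u a b := fun a b => (hNm a b).continuous
      have hGc : ∀ a b, Continuous fun u => (P i).2.2 u a b := fun a b => (hG a b).continuous
      have hMc : ∀ a b, Continuous fun u => M u a b := fun a b => (hM' a b).continuous
      have hMtc : ∀ a b, Continuous fun u => Mt u a b := fun a b => (hMt' a b).continuous
      have hD1 : HasDerivAt (fun τ => (P i).1ᵀ *ᵥ w τ) ((P i).1ᵀ *ᵥ deriv w t) t :=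
        hasDerivAt_mulVec _ ((hw'.differentiable (by simp) t).hasDerivAt)
      have hD2 := aux_key T (P i).2.1 hNm w hwc htT
      have hD3 := hasDerivAt_shiftT (P i).2.2 hG T zT t
      have hRd : HasDerivAt (R i)
          (((-1:ℝ)^(i+1)) • ((P i).1ᵀ *ᵥ deriv w t) +
           ((-1:ℝ)^(i+1)) • (-(((P i).2.1 0)ᵀ *ᵥ w t)
             - ∫ s in Set.Ioc t T, (matDeriv (P i).2.1 (s - t))ᵀ *ᵥ w s) +
           ((-1:ℝ)^i) • (-((matDeriv (P i).2.2 (T - t))ᵀ *ᵥ zT))) t :=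
        ((hD1.const_smul ((-1:ℝ)^(i+1))).add (hD2.const_smul ((-1:ℝ)^(i+1)))).add (hD3.const_smul ((-1:ℝ)^i))
      have hL : HasDerivAt (iteratedDeriv (i+1) w) (deriv (iteratedDeriv (i+1) w) t) t :=
        ((hiter (i+1)).differentiable (by simp) t).hasDerivAt
      have hu : UniqueDiffWithinAt ℝ (Set.Ico (0:ℝ) T) t := uniqueDiffOn_Ico 0 T t ht
      have hA := (hL.hasDerivWithinAt (s := Set.Ico 0 T)).derivWithin hu
      have hB := ((hRd.hasDerivWithinAt (s := Set.Ico 0 T)).congr ih (ih t ht)).derivWithin hu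
      have hEq : iteratedDeriv (i + 1 + 1) w t
          = ((-1:ℝ)^(i+1)) • ((P i).1ᵀ *ᵥ deriv w t) +
            ((-1:ℝ)^(i+1)) • (-(((P i).2.1 0)ᵀ *ᵥ w t)
              - ∫ s in Set.Ioc t T, (matDeriv (P i).2.1 (s - t))ᵀ *ᵥ w s) +
            ((-1:ℝ)^i) • (-((matDeriv (P i).2.2 (T - t))ᵀ *ᵥ zT)) := by
        rw [iteratedDeriv_succ, ← hA]
        exact hB
      rw [hEq, heq t ht]
      -- now pure algebra
      -- integrability facts
      have hIM : IntegrableOn (fun s => (M (s - t))ᵀ *ᵥ w s) (Set.Ioc t T) :=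
        (cont_shift_mulVec M hMc w hwc t).integrableOn_Ioc
      have hIMB : IntegrableOn (fun s => ((fun u => M u * (P i).1) (s - t))ᵀ *ᵥ w s) (Set.Ioc t T) := by
        refine (cont_shift_mulVec (fun u => M u * (P i).1) ?_ w hwc t).integrableOn_Ioc
        intro a b
        simp only [Matrix.mul_apply]
        exact continuous_finset_sum _ fun j _ => (hMc a j).mul continuous_const
      have hIN : IntegrableOn (fun s => (matDeriv (P i).2.1 (s - t))ᵀ *ᵥ w s) (Set.Ioc t T) := by
        refine (cont_shift_mulVec _ ?_ w hwc t).integrableOn_Ioc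
        intro a b
        exact (hNm a b).continuous_deriv (by exact_mod_cast le_top)
      -- expand R (i+1)
      simp only [hR, hP]
      show _ = ((-1:ℝ)^(i+1+1)) • ((adjSeq A M Mt (i+1)).1ᵀ *ᵥ w t) +
        ((-1:ℝ)^(i+1+1)) • (∫ s in Set.Ioc t T, ((adjSeq A M Mt (i+1)).2.1 (s - t))ᵀ *ᵥ w s) +
        ((-1:ℝ)^(i+1)) • (((adjSeq A M Mt (i+1)).2.2 (T - t))ᵀ *ᵥ zT)
      have hstep : adjSeq A M Mt (i+1)
          = (A * (P i).1 + (P i).2.1 0,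
             fun u => M u * (P i).1 + matDeriv (P i).2.1 u,
             fun u => Mt u * (P i).1 + matDeriv (P i).2.2 u) := by
        rw [hP]
        rfl
      rw [hstep]
      -- expand everything
      have hsplit : (∫ s in Set.Ioc t T,
            ((M (s - t) * (P i).1 + matDeriv (P i).2.1 (s - t))ᵀ *ᵥ w s))
          = (∫ s in Set.Ioc t T, ((M (s - t) * (P i).1)ᵀ *ᵥ w s))
            + ∫ s in Set.Ioc t T, ((matDeriv (P i).2.1 (s - t))ᵀ *ᵥ w s) := by
        rw [← integral_add hIMB hIN]
        congr 1
        funext s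
        rw [Matrix.transpose_add, Matrix.add_mulVec]
      have hcomm : (P i).1ᵀ *ᵥ (∫ s in Set.Ioc t T, (M (s - t))ᵀ *ᵥ w s)
          = ∫ s in Set.Ioc t T, ((M (s - t) * (P i).1)ᵀ *ᵥ w s) := by
        rw [mulVec_integral _ hIM]
        congr 1
        funext s
        rw [Matrix.mulVec_mulVec, ← Matrix.transpose_mul]
      rw [hsplit]
      rw [Matrix.mulVec_add, Matrix.mulVec_sub, Matrix.mulVec_neg, hcomm]
      rw [Matrix.mulVec_mulVec, ← Matrix.transpose_mul]
      rw [Matrix.mulVec_mulVec, ← Matrix.transpose_mul]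
      rw [Matrix.transpose_add, Matrix.add_mulVec, Matrix.transpose_add, Matrix.add_mulVec]
      have hpow1 : ((-1:ℝ)^(i+1)) = -((-1:ℝ)^i) := by rw [pow_succ]; ring
      have hpow2 : ((-1:ℝ)^(i+1+1)) = ((-1:ℝ)^i) := by rw [pow_succ, pow_succ]; ring
      rw [hpow1, hpow2]
      module
  -- Phase 2 : extension to t = T
  have ext : ∀ i, iteratedDeriv (i + 1) w T = R i T := by
    intro i
    have hNmc : ∀ a b, Continuous fun u => (P i).2.1 u a b :=
      fun a b => ((hsm i).1 a b).continuous
    have hGc : ∀ a b, Continuous fun u => (P i).2.2 u a b :=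
      fun a b => ((hsm i).2 a b).continuous
    have h₁ : Filter.Tendsto (iteratedDeriv (i+1) w) (nhdsWithin T (Set.Iio T))
        (nhds (iteratedDeriv (i+1) w T)) :=
      (((hiter (i+1)).continuous.tendsto T)).mono_left nhdsWithin_le_nhds
    have hT2 : Filter.Tendsto (fun τ => ((-1:ℝ)^(i+1)) • ((P i).1ᵀ *ᵥ w τ))
        (nhdsWithin T (Set.Iio T)) (nhds (((-1:ℝ)^(i+1)) • ((P i).1ᵀ *ᵥ w T))) :=
      ((((cont_mulVec_comp ((P i).1ᵀ) hwc)).tendsto T).mono_left nhdsWithin_le_nhds).const_smul _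
    have hT3 : Filter.Tendsto
        (fun τ => ((-1:ℝ)^(i+1)) • (∫ s in Set.Ioc τ T, ((P i).2.1 (s - τ))ᵀ *ᵥ w s))
        (nhdsWithin T (Set.Iio T)) (nhds (((-1:ℝ)^(i+1)) • (0 : Fin n → ℝ))) :=
      (aux_tendsto T (P i).2.1 hNmc w hwc).const_smul _
    have hT4 : Filter.Tendsto (fun τ => ((-1:ℝ)^i) • (((P i).2.2 (T - τ))ᵀ *ᵥ zT))
        (nhdsWithin T (Set.Iio T)) (nhds (((-1:ℝ)^i) • (((P i).2.2 (T - T))ᵀ *ᵥ zT))) :=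
      (((cont_mulVec_entries (P i).2.2 hGc zT (fun τ => T - τ)
        (continuous_const.sub continuous_id)).tendsto T).mono_left nhdsWithin_le_nhds).const_smul _
    have hval : R i T = ((-1:ℝ)^(i+1)) • ((P i).1ᵀ *ᵥ w T)
        + ((-1:ℝ)^(i+1)) • (0 : Fin n → ℝ)
        + ((-1:ℝ)^i) • (((P i).2.2 (T - T))ᵀ *ᵥ zT) := by
      simp only [hR]
      congr 2
      rw [Set.Ioc_self]
      simp
    have h₂ : Filter.Tendsto (R i) (nhdsWithin T (Set.Iio T)) (nhds (R i T)) := by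
      rw [hval]
      exact (hT2.add hT3).add hT4
    have hfe : iteratedDeriv (i+1) w =ᶠ[nhdsWithin T (Set.Iio T)] R i := by
      filter_upwards [Ioo_mem_nhdsLT hT] with τ hτ
      exact key i τ ⟨hτ.1.le, hτ.2⟩
    have h₃ : Filter.Tendsto (iteratedDeriv (i+1) w) (nhdsWithin T (Set.Iio T))
        (nhds (R i T)) := h₂.congr' hfe.symm
    exact tendsto_nhds_unique h₁ h₃
  intro i t ht
  rcases ht.2.lt_or_eq with hlt | hte
  · exact key i t ⟨ht.1, hlt⟩
  · rw [hte]
    exact ext i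
end

section
/- Assume M, M̃ : [0,T] → ℝ^{n×n} are C^∞, define inductively A_1 = A, M_1 = M, M̃_1 = M̃ and A_{i+1} = A A_i + M_i(0), M_{i+1}(t) = M(t) A_i + M_i'(t), M̃_{i+1}(t) = M̃(t) A_i + M̃_i'(t) for i ≥ 1, and assume M̃^{(i)}(0) = M̃(0) G_i for some matrices G_i ∈ ℝ^{n×n} for every i ≥ 1. Define F_i = A_i + G_1 A_{i−1} + ⋯ + G_{i−1} A_1 + G_i. Then M̃_1(0) = M̃(0) and for every i ≥ 1, M̃_{i+1}(0) = M̃(0) F_i. -/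
open MeasureTheory Matrix Set

/-- `Amat A M i = A_i` (using only the `A`- and `M`-parts of the recursion), with the
convention `A₀ = Iₙ`. -/
noncomputable def Amat {n : ℕ} (A : Matrix (Fin n) (Fin n) ℝ)
    (M Mt : ℝ → Matrix (Fin n) (Fin n) ℝ) : ℕ → Matrix (Fin n) (Fin n) ℝ
  | 0 => 1
  | i + 1 => (adjSeq A M Mt i).1

lemma adjSeq_formula {n : ℕ} (A : Matrix (Fin n) (Fin n) ℝ)
    (M Mt : ℝ → Matrix (Fin n) (Fin n) ℝ)
    (hMtsm : ∀ a b, ContDiff ℝ (⊤ : ℕ∞) (fun t => Mt t a b)) (i : ℕ) :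
    (adjSeq A M Mt i).2.2 = fun t => ∑ j ∈ Finset.range (i+1),
      (Matrix.of fun a b => iteratedDeriv j (fun s => Mt s a b) t) * Amat A M Mt (i - j) := by
  have hd : ∀ j a b, Differentiable ℝ (iteratedDeriv j (fun t => Mt t a b)) := by
    intro j a b
    exact (hMtsm a b).differentiable_iteratedDeriv j
      (by exact_mod_cast ENat.coe_lt_top j)
  induction i with
  | zero =>
    funext t
    simp [adjSeq, Amat, iteratedDeriv_zero]
    rfl
  | succ i ih =>
    funext t
    show Mt t * (adjSeq A M Mt i).1 + matDeriv (adjSeq A M Mt i).2.2 t = _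
    rw [ih]
    have hder : matDeriv (fun s => ∑ j ∈ Finset.range (i+1),
        (Matrix.of fun a b => iteratedDeriv j (fun u => Mt u a b) s) * Amat A M Mt (i - j)) t
      = ∑ j ∈ Finset.range (i+1),
        (Matrix.of fun a b => iteratedDeriv (j+1) (fun u => Mt u a b) t) * Amat A M Mt (i - j) := by
      ext a b
      simp only [matDeriv, Matrix.of_apply, Matrix.sum_apply, Matrix.mul_apply]
      rw [deriv_fun_sum]
      · refine Finset.sum_congr rfl fun j _ => ?_
        rw [deriv_fun_sum]
        · refine Finset.sum_congr rfl fun k _ => ?_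
          rw [deriv_mul_const ((hd j a k).differentiableAt)]
          rw [iteratedDeriv_succ]
        · intro k _
          exact ((hd j a k).differentiableAt).mul_const _
      · intro j _
        exact DifferentiableAt.fun_sum fun k _ => ((hd j a k).differentiableAt).mul_const _
    rw [hder]
    conv_rhs => rw [Finset.sum_range_succ']
    have h0 : (Matrix.of fun a b => iteratedDeriv 0 (fun s => Mt s a b) t) *
        Amat A M Mt (i + 1 - 0) = Mt t * (adjSeq A M Mt i).1 := by
      simp [iteratedDeriv_zero, Amat]
      rfl
    rw [h0, add_comm]
    congr 1
    refine Finset.sum_congr rfl fun j _ => ?_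
    rw [Nat.succ_sub_succ]

/-- if `M̃^{(i)}(0) = M̃(0) Gᵢ` for all `i ≥ 1`, then `M̃₁(0) = M̃(0)` and
`M̃_{i+1}(0) = M̃(0) Fᵢ` for all `i ≥ 1`, where
`Fᵢ = Aᵢ + G₁A_{i-1} + ⋯ + G_{i-1}A₁ + Gᵢ`. -/
theorem tilde_M_seq_at_zero
    (T : ℝ) (hT : 0 < T) (n : ℕ)
    (A : Matrix (Fin n) (Fin n) ℝ)
    (M Mt : ℝ → Matrix (Fin n) (Fin n) ℝ)
    (hMsm : ∀ i j, ContDiff ℝ (⊤ : ℕ∞) (fun t => M t i j))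
    (hMtsm : ∀ i j, ContDiff ℝ (⊤ : ℕ∞) (fun t => Mt t i j))
    (G : ℕ → Matrix (Fin n) (Fin n) ℝ)
    (hG : ∀ i, 1 ≤ i →
      (Matrix.of fun a b => iteratedDeriv i (fun t => Mt t a b) 0) = Mt 0 * G i)
    (F : ℕ → Matrix (Fin n) (Fin n) ℝ)
    (hF : ∀ i, 1 ≤ i →
      F i = Amat A M Mt i + ∑ j ∈ Finset.Icc 1 i, G j * Amat A M Mt (i - j)) :
    (adjSeq A M Mt 0).2.2 0 = Mt 0 ∧
    ∀ i, 1 ≤ i → (adjSeq A M Mt i).2.2 0 = Mt 0 * F i := by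
  refine ⟨rfl, fun i hi => ?_⟩
  rw [adjSeq_formula A M Mt hMtsm i]
  rw [hF i hi, Matrix.mul_add, Finset.mul_sum]
  beta_reduce
  rw [Finset.sum_range_succ']
  have h0 : (Matrix.of fun a b => iteratedDeriv 0 (fun s => Mt s a b) (0:ℝ)) *
      Amat A M Mt (i - 0) = Mt 0 * Amat A M Mt i := by
    simp [iteratedDeriv_zero]
    rfl
  rw [h0, add_comm]
  congr 1
  rw [← Finset.Ico_add_one_right_eq_Icc, Finset.sum_Ico_eq_sum_range]
  simp only [Nat.add_sub_cancel]
  refine Finset.sum_congr rfl fun k hk => ?_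
  rw [hG (k+1) (Nat.succ_le_succ (Nat.zero_le k)), mul_assoc, add_comm 1 k]
end
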